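/- arXiv:1907.11120 — 2 statements merged into one kernel-verified Lean document; each statement's English description precedes it below -/
import Mathlib

section
/- Let Γ ⊆ Sym({1,…,n}) be a permutation group, let d be even, let v ∈ S_d(Γ) be irreducible, and let τ ∈ O(ℝ^d) with det τ = −1. Then v and the mirror arrangement τv = (τv_1,…,τv_n) (which again lies in S_d(Γ)) are not deformation equivalent. -/
/-!
For Γ-arrangements `v`, `w` with representations `T_v`, `T_w`, the Gram matrix `M_wᵀ M_v`
intertwines `T_v` with `T_w`. Along a deformation `c` it has determinant `detPair (c s) (c t)`,
which is `1` on the diagonal, so nearby arrangements have positively isomorphic representations;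
by connectedness of `[0, 1]` the representation of `τv` is positively isomorphic to `T` through
some `R` with `det R > 0`. Since `τ` itself intertwines `T` with `τ T τᵀ`, the matrix `R τ`
commutes with `T` and has negative determinant.

This is impossible in even dimension: the characteristic polynomial of a commuting `C` with
`det C < 0` is monic of even degree and negative at `0`, so `C` has a real eigenvalue `l`; by
Schur's lemma the singular commuting matrix `l - C` vanishes, and `det C = l ^ d ≥ 0`.
-/

open Matrix

/-- The matrix of an arrangement of `n` points in `ℝ^d`: the `i`-th row is the point `v i`. -/
def arrMat {n d : ℕ} (v : Fin n → Fin d → ℝ) : Matrix (Fin n) (Fin d) ℝ := Matrix.of v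

/-- An arrangement is normalized if `MᵀM` is the identity matrix. -/
def IsNormalized {n d : ℕ} (v : Fin n → Fin d → ℝ) : Prop :=
  (arrMat v)ᵀ * arrMat v = 1

/-- The arrangement space of `v`: the column span of its matrix, a subspace of `ℝ^n`. -/
def arrSpace {n d : ℕ} (v : Fin n → Fin d → ℝ) : Submodule ℝ (Fin n → ℝ) :=
  Submodule.span ℝ (Set.range (arrMat v)ᵀ)

/-- `detPair v w = det (M_wᵀ * M_v)`, i.e. `det(v, w̄) = det(M̄ᵀ M)` with `w` playing `v̄`. -/
noncomputable def detPair {n d : ℕ} (v w : Fin n → Fin d → ℝ) : ℝ :=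
  ((arrMat w)ᵀ * arrMat v).det

/-- Two subspaces `U, W ⊆ ℝ^n` are orthogonal if `⟨u, w⟩ = 0` for all `u ∈ U`, `w ∈ W`. -/
def OrthSpaces {n : ℕ} (U W : Submodule ℝ (Fin n → ℝ)) : Prop :=
  ∀ u ∈ U, ∀ w ∈ W, u ⬝ᵥ w = 0

/-- Arrangements are equivalent if related by an invertible linear map `X`. -/
def AreEquivalent {n d : ℕ} (v w : Fin n → Fin d → ℝ) : Prop :=
  ∃ X : Matrix (Fin d) (Fin d) ℝ, X.det ≠ 0 ∧ ∀ i, X.mulVec (v i) = w i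

/-- Arrangements are positively equivalent if related by a linear map of positive determinant. -/
def PosEquivalent {n d : ℕ} (v w : Fin n → Fin d → ℝ) : Prop :=
  ∃ X : Matrix (Fin d) (Fin d) ℝ, 0 < X.det ∧ ∀ i, X.mulVec (v i) = w i

/-- `T : Γ → O(ℝ^d)` is a representation: orthogonal values and multiplicative. -/
def IsRep {n d : ℕ} (Γ : Subgroup (Equiv.Perm (Fin n)))
    (T : Γ → Matrix (Fin d) (Fin d) ℝ) : Prop :=
  (∀ φ, (T φ)ᵀ * T φ = 1) ∧ (∀ φ ψ, T (φ * ψ) = T φ * T ψ)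

/-- `T` is a representation of the arrangement `v`: `T_φ v_i = v_{φ(i)}`. -/
def IsRepOf {n d : ℕ} (Γ : Subgroup (Equiv.Perm (Fin n)))
    (T : Γ → Matrix (Fin d) (Fin d) ℝ) (v : Fin n → Fin d → ℝ) : Prop :=
  IsRep Γ T ∧ ∀ (φ : Γ) (i : Fin n), (T φ).mulVec (v i) = v (φ.val i)

/-- `v` is a `Γ`-arrangement if it has a representation. -/
def IsGammaArr {n d : ℕ} (Γ : Subgroup (Equiv.Perm (Fin n)))
    (v : Fin n → Fin d → ℝ) : Prop :=
  ∃ T : Γ → Matrix (Fin d) (Fin d) ℝ, IsRepOf Γ T v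

/-- A representation is irreducible if the only invariant subspaces of `ℝ^d` are `⊥` and `⊤`. -/
def IrredRep {n d : ℕ} (Γ : Subgroup (Equiv.Perm (Fin n)))
    (T : Γ → Matrix (Fin d) (Fin d) ℝ) : Prop :=
  ∀ W : Submodule ℝ (Fin d → ℝ), (∀ (φ : Γ), ∀ x ∈ W, (T φ).mulVec x ∈ W) → W = ⊥ ∨ W = ⊤

/-- Representations are isomorphic: an invertible equivariant map exists. -/
def IsoReps {n d : ℕ} (Γ : Subgroup (Equiv.Perm (Fin n)))
    (T T' : Γ → Matrix (Fin d) (Fin d) ℝ) : Prop :=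
  ∃ R : Matrix (Fin d) (Fin d) ℝ, R.det ≠ 0 ∧ ∀ φ, R * T φ = T' φ * R

/-- Representations are positively isomorphic: an equivariant map with positive determinant. -/
def PosIsoReps {n d : ℕ} (Γ : Subgroup (Equiv.Perm (Fin n)))
    (T T' : Γ → Matrix (Fin d) (Fin d) ℝ) : Prop :=
  ∃ R : Matrix (Fin d) (Fin d) ℝ, 0 < R.det ∧ ∀ φ, R * T φ = T' φ * R

/-- `S_d(Γ)`: the set of normalized `Γ`-arrangements of `n` points in `ℝ^d`. -/
def SdSet (n d : ℕ) (Γ : Subgroup (Equiv.Perm (Fin n))) : Set (Fin n → Fin d → ℝ) :=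
  {v | IsNormalized v ∧ IsGammaArr Γ v}

/-- Deformation equivalence: a continuous path in `S_d(Γ)` from `v` to `w`. -/
def DeformEquiv {n d : ℕ} (Γ : Subgroup (Equiv.Perm (Fin n)))
    (v w : Fin n → Fin d → ℝ) : Prop :=
  ∃ c : ℝ → (Fin n → Fin d → ℝ), ContinuousOn c (Set.Icc 0 1) ∧
    (∀ t ∈ Set.Icc (0:ℝ) 1, c t ∈ SdSet n d Γ) ∧ c 0 = v ∧ c 1 = w

/-- `v` is flexible if it can be deformed into some non-equivalent arrangement. -/
def Flexible {n d : ℕ} (Γ : Subgroup (Equiv.Perm (Fin n))) (v : Fin n → Fin d → ℝ) : Prop :=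
  ∃ w : Fin n → Fin d → ℝ, DeformEquiv Γ v w ∧ ¬ AreEquivalent v w

/-- A subspace `W ⊆ ℝ^n` is `Γ`-invariant (under the permutation action). -/
def GammaInvariant {n : ℕ} (Γ : Subgroup (Equiv.Perm (Fin n)))
    (W : Submodule ℝ (Fin n → ℝ)) : Prop :=
  ∀ (φ : Γ), ∀ x ∈ W, (fun i => x (φ.val⁻¹ i)) ∈ W

section Arrangements

variable {n d : ℕ} {Γ : Subgroup (Equiv.Perm (Fin n))}

lemma arrMat_mulVec (S : Matrix (Fin d) (Fin d) ℝ) (v : Fin n → Fin d → ℝ) :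
    arrMat (fun i => S *ᵥ v i) = arrMat v * Sᵀ := by
  ext i j
  simp only [arrMat, Matrix.of_apply, Matrix.mul_apply, Matrix.mulVec, dotProduct,
    Matrix.transpose_apply]
  exact Finset.sum_congr rfl fun k _ => mul_comm _ _

lemma gram_comp_perm (v w : Fin n → Fin d → ℝ) (σ : Equiv.Perm (Fin n)) :
    (arrMat (fun i => w (σ i)))ᵀ * arrMat (fun i => v (σ i)) = (arrMat w)ᵀ * arrMat v := by
  change ((arrMat w).submatrix σ id)ᵀ * (arrMat v).submatrix σ id = _
  rw [Matrix.transpose_submatrix, Matrix.submatrix_mul_equiv, Matrix.submatrix_id_id]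

lemma IsNormalized.mulVec {v : Fin n → Fin d → ℝ} (hv : IsNormalized v)
    {τ : Matrix (Fin d) (Fin d) ℝ} (hτ : τᵀ * τ = 1) :
    IsNormalized (fun i => τ *ᵥ v i) := by
  unfold IsNormalized at hv ⊢
  rw [arrMat_mulVec, Matrix.transpose_mul, Matrix.transpose_transpose, Matrix.mul_assoc,
    ← Matrix.mul_assoc (arrMat v)ᵀ, hv, Matrix.one_mul, mul_eq_one_comm.mp hτ]

lemma IsRepOf.mulVec {T : Γ → Matrix (Fin d) (Fin d) ℝ} {v : Fin n → Fin d → ℝ}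
    (hT : IsRepOf Γ T v) {τ : Matrix (Fin d) (Fin d) ℝ} (hτ : τᵀ * τ = 1) :
    IsRepOf Γ (fun φ => τ * T φ * τᵀ) (fun i => τ *ᵥ v i) := by
  have hττ := mul_eq_one_comm.mp hτ
  refine ⟨⟨fun φ => ?_, fun φ ψ => ?_⟩, fun φ i => ?_⟩
  · simp only [Matrix.transpose_mul, Matrix.transpose_transpose, Matrix.mul_assoc]
    rw [← Matrix.mul_assoc τᵀ, hτ, Matrix.one_mul, ← Matrix.mul_assoc (T φ)ᵀ, hT.1.1 φ,
      Matrix.one_mul, hττ]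
  · simp only [hT.1.2 φ ψ, Matrix.mul_assoc]
    rw [← Matrix.mul_assoc τᵀ τ, hτ, Matrix.one_mul]
  · rw [Matrix.mulVec_mulVec, Matrix.mul_assoc, hτ, Matrix.mul_one, ← Matrix.mulVec_mulVec,
      hT.2 φ i]

lemma IsRepOf.gram_intertwines {T₁ T₂ : Γ → Matrix (Fin d) (Fin d) ℝ}
    {v w : Fin n → Fin d → ℝ} (h₁ : IsRepOf Γ T₁ v) (h₂ : IsRepOf Γ T₂ w) (φ : Γ) :
    (arrMat w)ᵀ * arrMat v * T₁ φ = T₂ φ * ((arrMat w)ᵀ * arrMat v) := by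
  have hmove : ∀ {T : Γ → Matrix (Fin d) (Fin d) ℝ} {u : Fin n → Fin d → ℝ},
      IsRepOf Γ T u → arrMat u * (T φ)ᵀ = arrMat (fun i => u (φ.val i)) := fun hT => by
    rw [← arrMat_mulVec]; exact congrArg arrMat (funext (hT.2 φ))
  calc (arrMat w)ᵀ * arrMat v * T₁ φ
      = (arrMat (fun i => w (φ.val i)))ᵀ * arrMat (fun i => v (φ.val i)) * T₁ φ := by
        rw [gram_comp_perm]
    _ = T₂ φ * ((arrMat w)ᵀ * arrMat v) * ((T₁ φ)ᵀ * T₁ φ) := by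
        rw [← hmove h₁, ← hmove h₂, Matrix.transpose_mul, Matrix.transpose_transpose]
        simp only [Matrix.mul_assoc]
    _ = T₂ φ * ((arrMat w)ᵀ * arrMat v) := by rw [h₁.1.1 φ, Matrix.mul_one]

lemma PosIsoReps.trans {T₁ T₂ T₃ : Γ → Matrix (Fin d) (Fin d) ℝ}
    (h₁₂ : PosIsoReps Γ T₁ T₂) (h₂₃ : PosIsoReps Γ T₂ T₃) : PosIsoReps Γ T₁ T₃ := by
  obtain ⟨R, hR, hRT⟩ := h₁₂
  obtain ⟨R', hR', hR'T⟩ := h₂₃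
  refine ⟨R' * R, by rw [Matrix.det_mul]; positivity, fun φ => ?_⟩
  rw [Matrix.mul_assoc, hRT, ← Matrix.mul_assoc, hR'T, Matrix.mul_assoc]

lemma posIsoReps_of_detPair_pos {T₁ T₂ : Γ → Matrix (Fin d) (Fin d) ℝ}
    {v w : Fin n → Fin d → ℝ} (h₁ : IsRepOf Γ T₁ v) (h₂ : IsRepOf Γ T₂ w)
    (h : 0 < detPair v w) : PosIsoReps Γ T₁ T₂ :=
  ⟨_, h, h₁.gram_intertwines h₂⟩

lemma continuous_detPair :
    Continuous fun p : (Fin n → Fin d → ℝ) × (Fin n → Fin d → ℝ) => detPair p.1 p.2 :=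
  (continuous_snd.matrix_transpose.matrix_mul continuous_fst).matrix_det

lemma detPair_self {v : Fin n → Fin d → ℝ} (hv : IsNormalized v) : detPair v v = 1 := by
  rw [detPair, hv, Matrix.det_one]

end Arrangements

namespace Polynomial

lemma exists_isRoot_of_eval_neg {p : ℝ[X]} (hdeg : 0 < p.degree) (hlc : 0 ≤ p.leadingCoeff)
    {a : ℝ} (ha : p.eval a < 0) : ∃ x, a ≤ x ∧ p.IsRoot x := by
  obtain ⟨b, hb, hab⟩ := (((p.tendsto_atTop_of_leadingCoeff_nonneg hdeg hlc).eventually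
    (Filter.eventually_ge_atTop 0)).and (Filter.eventually_ge_atTop a)).exists
  obtain ⟨x, hx, hroot⟩ := intermediate_value_Icc hab p.continuous.continuousOn ⟨ha.le, hb⟩
  exact ⟨x, hx.1, hroot⟩

end Polynomial

section Schur

variable {n d : ℕ} {Γ : Subgroup (Equiv.Perm (Fin n))} {T : Γ → Matrix (Fin d) (Fin d) ℝ}

lemma IrredRep.eq_zero_of_det_eq_zero (hT : IrredRep Γ T) {T' : Γ → Matrix (Fin d) (Fin d) ℝ}
    {B : Matrix (Fin d) (Fin d) ℝ} (hB : ∀ φ, B * T φ = T' φ * B) (hdet : B.det = 0) :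
    B = 0 := by
  have hinv : ∀ φ : Γ, ∀ x ∈ LinearMap.ker B.mulVecLin, T φ *ᵥ x ∈ LinearMap.ker B.mulVecLin := by
    intro φ x hx
    simp only [LinearMap.mem_ker, Matrix.mulVecLin_apply] at hx ⊢
    rw [Matrix.mulVec_mulVec, hB, ← Matrix.mulVec_mulVec, hx, Matrix.mulVec_zero]
  rcases hT _ hinv with hker | hker
  · obtain ⟨u, hu, hBu⟩ := Matrix.exists_mulVec_eq_zero_iff.2 hdet
    exact absurd (by simpa [hker] using (show u ∈ LinearMap.ker B.mulVecLin from hBu)) hu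
  · exact Matrix.toLin'.injective (by rw [map_zero]; exact LinearMap.ker_eq_top.1 hker)

lemma IrredRep.det_nonneg_of_commute (hT : IrredRep Γ T) (hd : Even d)
    {C : Matrix (Fin d) (Fin d) ℝ} (hC : ∀ φ, C * T φ = T φ * C) : 0 ≤ C.det := by
  by_contra! hneg
  have hd0 : d ≠ 0 := by rintro rfl; norm_num at hneg
  have hdeg : 0 < C.charpoly.degree := by
    rw [Matrix.charpoly_degree_eq_dim, Fintype.card_fin]; exact_mod_cast Nat.pos_of_ne_zero hd0
  have heval0 : C.charpoly.eval 0 < 0 := by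
    rwa [Matrix.eval_charpoly, map_zero, zero_sub, Matrix.det_neg, Fintype.card_fin,
      hd.neg_one_pow, one_mul]
  obtain ⟨l, -, hl⟩ := Polynomial.exists_isRoot_of_eval_neg hdeg
    (by rw [C.charpoly_monic.leadingCoeff]; exact zero_le_one) heval0
  rw [Polynomial.IsRoot, Matrix.eval_charpoly] at hl
  have hcomm : ∀ φ, (Matrix.scalar _ l - C) * T φ = T φ * (Matrix.scalar _ l - C) := by
    intro φ
    rw [sub_mul, mul_sub, hC, (Matrix.scalar_commute l (Commute.all l) (T φ)).eq]
  have hCl : C = Matrix.scalar _ l := (sub_eq_zero.1 (hT.eq_zero_of_det_eq_zero hcomm hl)).symm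
  rw [hCl, Matrix.scalar_apply, Matrix.det_diagonal, Finset.prod_const, Finset.card_univ,
    Fintype.card_fin] at hneg
  exact hneg.not_ge (hd.pow_nonneg l)

end Schur

section Deformation

open Topology

variable {n d : ℕ} {Γ : Subgroup (Equiv.Perm (Fin n))}

lemma posIsoReps_of_continuousOn {X : Type*} [TopologicalSpace X] {s : Set X}
    (hs : IsPreconnected s) {c : X → Fin n → Fin d → ℝ} (hc : ContinuousOn c s)
    (hcS : ∀ x ∈ s, c x ∈ SdSet n d Γ) {x y : X} (hx : x ∈ s) (hy : y ∈ s)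
    {T T' : Γ → Matrix (Fin d) (Fin d) ℝ} (hT : IsRepOf Γ T (c x)) (hT' : IsRepOf Γ T' (c y)) :
    PosIsoReps Γ T T' := by
  let P : X → X → Prop := fun x y => ∀ T T' : Γ → Matrix (Fin d) (Fin d) ℝ,
    IsRepOf Γ T (c x) → IsRepOf Γ T' (c y) → PosIsoReps Γ T T'
  refine hs.induction₂' P (fun x hx => ?_) (fun x y z _ hy _ hxy hyz T T'' hT hT'' => ?_)
    hx hy T T' hT hT'
  · have hpos : ∀ {f : X → ℝ}, ContinuousWithinAt f s x → f x = 1 → ∀ᶠ y in 𝓝[s] x, 0 < f y :=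
      fun hf hfx => continuousWithinAt_const.eventually_lt hf (by rw [hfx]; exact one_pos)
    have h₁ := hpos (f := fun y => detPair (c x) (c y))
      (continuous_detPair.comp_continuousOn (continuousOn_const.prodMk hc) x hx)
      (detPair_self (hcS x hx).1)
    have h₂ := hpos (f := fun y => detPair (c y) (c x))
      (continuous_detPair.comp_continuousOn (hc.prodMk continuousOn_const) x hx)
      (detPair_self (hcS x hx).1)
    filter_upwards [h₁, h₂] with y hxy hyx
    exact ⟨fun T T' hT hT' => posIsoReps_of_detPair_pos hT hT' hxy,
      fun T T' hT hT' => posIsoReps_of_detPair_pos hT hT' hyx⟩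
  · obtain ⟨T', hT'⟩ := (hcS y hy).2
    exact (hxy T T' hT hT').trans (hyz T' T'' hT' hT'')

end Deformation

theorem stmt11 {n d : ℕ} (Γ : Subgroup (Equiv.Perm (Fin n))) (hd : Even d)
    (v : Fin n → Fin d → ℝ) (hv : v ∈ SdSet n d Γ)
    (T : Γ → Matrix (Fin d) (Fin d) ℝ)
    (hT : IsRepOf Γ T v) (hTirr : IrredRep Γ T)
    (τ : Matrix (Fin d) (Fin d) ℝ) (hτ : τᵀ * τ = 1) (hτdet : τ.det = -1) :
    (fun i => τ.mulVec (v i)) ∈ SdSet n d Γ ∧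
      ¬ DeformEquiv Γ v (fun i => τ.mulVec (v i)) := by
  have hmirror := hT.mulVec hτ
  refine ⟨⟨hv.1.mulVec hτ, _, hmirror⟩, ?_⟩
  rintro ⟨c, hc, hcS, hc0, hc1⟩
  obtain ⟨R, hRdet, hR⟩ := posIsoReps_of_continuousOn isPreconnected_Icc hc hcS
    (Set.right_mem_Icc.2 zero_le_one) (Set.left_mem_Icc.2 zero_le_one)
    (hc1 ▸ hmirror) (hc0 ▸ hT)
  have hcomm : ∀ φ, R * τ * T φ = T φ * (R * τ) := fun φ => by
    rw [← Matrix.mul_assoc, ← hR]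
    simp only [Matrix.mul_assoc]
    rw [hτ, Matrix.mul_one]
  have := hTirr.det_nonneg_of_commute hd hcomm
  rw [Matrix.det_mul, hτdet] at this
  linarith
end

section
/- Let Γ ⊆ Sym({1,…,n}) be a permutation group and let v ∈ S_d(Γ) be irreducible with representation T. Then v is flexible if and only if there exists an arrangement v̄ ∈ S_d(Γ) that is not equivalent to v and whose representation is isomorphic to T. -/
open Matrix

/-!
Along a deformation `c` the representation of `c t` is `φ ↦ M_{c t ∘ φ}ᵀ M_{c t}`, so its character
depends continuously on `t`. The dimension of the space of intertwiners from `T` to it is the inner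
product of characters, a continuous integer-valued function of `t`, hence constant; it is positive
at `t = 0`, so at the end there is a nonzero intertwiner, which is invertible because `T` is
irreducible (its kernel is `T`-invariant).

Conversely, if `R` intertwines `T` with the representation of `v̄`, then `u = R⁻¹ v̄` and every
point `(1 - t) v + t u` of the segment are `T`-arrangements. By Schur's lemma their Gram matrices
are scalar, so they become normalized after rescaling; and the segment can only pass through `0`
if `v̄` is a multiple of `R v`, i.e. equivalent to `v`.
-/

open Module Representation

section

variable {n d : ℕ} {Γ : Subgroup (Equiv.Perm (Fin n))} {T S : Γ → Matrix (Fin d) (Fin d) ℝ}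

theorem IsRep.map_one (hT : IsRep Γ T) : T 1 = 1 := by
  have h := hT.2 1 1
  rw [mul_one] at h
  calc T 1 = (T 1)ᵀ * T 1 * T 1 := by rw [hT.1, Matrix.one_mul]
    _ = 1 := by rw [Matrix.mul_assoc, ← h, hT.1]

noncomputable def IsRep.toRepresentation (hT : IsRep Γ T) :
    Representation ℝ Γ (Fin d → ℝ) where
  toFun φ := Matrix.toLin' (T φ)
  map_one' := by rw [hT.map_one, Matrix.toLin'_one]; rfl
  map_mul' φ ψ := by rw [hT.2, Matrix.toLin'_mul]; rfl

theorem IsRep.toMatrix'_toRepresentation (hT : IsRep Γ T) (φ : Γ) :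
    LinearMap.toMatrix' (hT.toRepresentation φ) = T φ :=
  LinearMap.toMatrix'_toLin' (T φ)

theorem IsRep.character_toRepresentation (hT : IsRep Γ T) (φ : Γ) :
    hT.toRepresentation.character φ = (T φ).trace :=
  Matrix.trace_toLin'_eq (T φ)

theorem IrredRep.det_ne_zero_of_intertwines (hT : IrredRep Γ T) {A : Matrix (Fin d) (Fin d) ℝ}
    (hA : ∀ φ, A * T φ = S φ * A) (hA0 : A ≠ 0) : A.det ≠ 0 := by
  intro hdet
  obtain ⟨x, hx0, hAx⟩ := Matrix.exists_mulVec_eq_zero_iff.mpr hdet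
  have hinv : ∀ φ : Γ, ∀ y ∈ LinearMap.ker A.mulVecLin,
      T φ *ᵥ y ∈ LinearMap.ker A.mulVecLin := by
    intro φ y hy
    simp only [LinearMap.mem_ker, Matrix.mulVecLin_apply] at hy ⊢
    rw [Matrix.mulVec_mulVec, hA, ← Matrix.mulVec_mulVec, hy, Matrix.mulVec_zero]
  rcases hT _ hinv with hbot | htop
  · exact hx0 ((Submodule.eq_bot_iff _).mp hbot x hAx)
  · refine hA0 (Matrix.toLin'.injective (LinearMap.ext fun y => ?_))
    have : y ∈ LinearMap.ker A.mulVecLin := htop ▸ Submodule.mem_top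
    simpa using this

theorem IrredRep.eq_smul_one_of_commute (hT : IrredRep Γ T) {B : Matrix (Fin d) (Fin d) ℝ}
    (hB : B.IsSymm) (hcomm : ∀ φ, T φ * B = B * T φ) : ∃ μ : ℝ, B = μ • 1 := by
  rcases isEmpty_or_nonempty (Fin d) with hd | ⟨⟨j⟩⟩
  · exact ⟨0, Subsingleton.elim _ _⟩
  have hherm : B.IsHermitian := by simpa [Matrix.IsHermitian] using hB.eq
  set μ := hherm.eigenvalues j
  have hsing : ¬ IsUnit (μ • 1 - B) := by
    simpa [spectrum.mem_iff, Algebra.algebraMap_eq_smul_one] using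
      hherm.eigenvalues_mem_spectrum_real j
  refine ⟨μ, (sub_eq_zero.mp ?_).symm⟩
  by_contra hne
  refine hsing ((Matrix.isUnit_iff_isUnit_det _).mpr (hT.det_ne_zero_of_intertwines (S := T)
    (fun φ => ?_) hne).isUnit)
  rw [Matrix.sub_mul, Matrix.mul_sub, hcomm, Matrix.smul_mul, Matrix.mul_smul, Matrix.one_mul,
    Matrix.mul_one]

variable {x y : Fin n → Fin d → ℝ}

theorem IsRepOf.arrMat_comp (hx : IsRepOf Γ T x) (φ : Γ) :
    arrMat (fun i => x (φ.val i)) = arrMat x * (T φ)ᵀ := by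
  ext i k
  simp [arrMat, Matrix.mul_apply, ← hx.2 φ i, Matrix.mulVec, dotProduct, mul_comm]

theorem transpose_arrMat_comp_mul_arrMat_comp (σ : Equiv.Perm (Fin n)) :
    (arrMat (fun i => x (σ i)))ᵀ * arrMat (fun i => y (σ i)) = (arrMat x)ᵀ * arrMat y := by
  ext k l
  simpa [arrMat, Matrix.mul_apply] using Equiv.sum_comp σ (fun i => x i k * y i l)

theorem IsRepOf.commute_gram (hx : IsRepOf Γ T x) (φ : Γ) :
    T φ * ((arrMat x)ᵀ * arrMat x) = (arrMat x)ᵀ * arrMat x * T φ := by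
  have h := transpose_arrMat_comp_mul_arrMat_comp (x := x) (y := x) φ.val
  rw [hx.arrMat_comp, Matrix.transpose_mul, Matrix.transpose_transpose] at h
  calc T φ * ((arrMat x)ᵀ * arrMat x)
      = T φ * ((arrMat x)ᵀ * arrMat x) * ((T φ)ᵀ * T φ) := by rw [hx.1.1, Matrix.mul_one]
    _ = T φ * (arrMat x)ᵀ * (arrMat x * (T φ)ᵀ) * T φ := by simp only [Matrix.mul_assoc]
    _ = (arrMat x)ᵀ * arrMat x * T φ := by rw [h]

theorem IrredRep.gram_eq_smul_one (hT : IrredRep Γ T) (hx : IsRepOf Γ T x) :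
    ∃ μ : ℝ, (arrMat x)ᵀ * arrMat x = μ • 1 :=
  hT.eq_smul_one_of_commute (by simp [Matrix.IsSymm, Matrix.transpose_mul]) hx.commute_gram

theorem trace_transpose_arrMat_mul_arrMat :
    ((arrMat x)ᵀ * arrMat y).trace = ∑ i, x i ⬝ᵥ y i := by
  simp only [Matrix.trace, Matrix.diag, Matrix.mul_apply, arrMat, Matrix.transpose_apply,
    Matrix.of_apply, dotProduct]
  exact Finset.sum_comm

theorem IsRepOf.smul (hx : IsRepOf Γ T x) (c : ℝ) : IsRepOf Γ T (c • x) :=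
  ⟨hx.1, fun φ i => by simp [Matrix.mulVec_smul, hx.2]⟩

theorem IsRepOf.add (hx : IsRepOf Γ T x) (hy : IsRepOf Γ T y) : IsRepOf Γ T (x + y) :=
  ⟨hx.1, fun φ i => by simp [Matrix.mulVec_add, hx.2, hy.2]⟩

-- Scaled so that `∑ i, x i ⬝ᵥ x i = d = trace 1`: this normalizes `x` when its Gram matrix
-- is scalar.
noncomputable def arrNormalize (x : Fin n → Fin d → ℝ) : Fin n → Fin d → ℝ :=
  Real.sqrt (d / ∑ i, x i ⬝ᵥ x i) • x

theorem sum_dotProduct_self_pos (hx : x ≠ 0) : 0 < ∑ i, x i ⬝ᵥ x i := by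
  have hnn (v : Fin d → ℝ) : 0 ≤ v ⬝ᵥ v := Finset.sum_nonneg fun _ _ => mul_self_nonneg _
  obtain ⟨i, hi⟩ := Function.ne_iff.mp hx
  exact Finset.sum_pos' (fun j _ => hnn _) ⟨i, Finset.mem_univ _,
    lt_of_le_of_ne (hnn _) (Ne.symm (mt dotProduct_self_eq_zero.mp hi))⟩

theorem IsNormalized.arrNormalize_eq (hx : IsNormalized x) : arrNormalize x = x := by
  rcases eq_or_ne d 0 with rfl | hd
  · exact Subsingleton.elim _ _
  rw [arrNormalize, ← trace_transpose_arrMat_mul_arrMat, hx, Matrix.trace_one]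
  simp [hd]

theorem IrredRep.isNormalized_arrNormalize (hT : IrredRep Γ T) (hx : IsRepOf Γ T x)
    (hx0 : x ≠ 0) : IsNormalized (arrNormalize x) := by
  obtain ⟨μ, hμ⟩ := hT.gram_eq_smul_one hx
  have hsum : ∑ i, x i ⬝ᵥ x i = μ * d := by
    rw [← trace_transpose_arrMat_mul_arrMat, hμ]; simp
  have hpos := sum_dotProduct_self_pos hx0
  have hd : (d : ℝ) ≠ 0 := by rintro h; simp [h] at hsum; linarith
  have hμ0 : μ ≠ 0 := by rintro rfl; simp at hsum; linarith
  have harr : arrMat (arrNormalize x) = Real.sqrt (d / ∑ i, x i ⬝ᵥ x i) • arrMat x := rfl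
  rw [IsNormalized, harr, Matrix.transpose_smul, Matrix.smul_mul, Matrix.mul_smul, hμ, smul_smul,
    smul_smul, ← sq, Real.sq_sqrt (by positivity), hsum]
  field_simp
  simp

theorem continuousOn_arrNormalize :
    ContinuousOn (arrNormalize : (Fin n → Fin d → ℝ) → _) {x | x ≠ 0} := by
  have hF : Continuous fun x : Fin n → Fin d → ℝ => ∑ i, x i ⬝ᵥ x i := by
    simp only [dotProduct]; fun_prop
  exact (((continuous_const.continuousOn.div hF.continuousOn
    fun x hx => (sum_dotProduct_self_pos hx).ne').sqrt).smul continuousOn_id)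

theorem AreEquivalent.symm {v w : Fin n → Fin d → ℝ} (h : AreEquivalent v w) :
    AreEquivalent w v := by
  obtain ⟨X, hX, hXv⟩ := h
  have hu : IsUnit X.det := hX.isUnit
  refine ⟨X⁻¹, by simpa [Matrix.det_nonsing_inv] using hX, fun i => ?_⟩
  rw [← hXv, Matrix.mulVec_mulVec, Matrix.nonsing_inv_mul _ hu, Matrix.one_mulVec]

theorem AreEquivalent.trans {u v w : Fin n → Fin d → ℝ} (huv : AreEquivalent u v)
    (hvw : AreEquivalent v w) : AreEquivalent u w := by
  obtain ⟨X, hX, hXu⟩ := huv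
  obtain ⟨Y, hY, hYv⟩ := hvw
  exact ⟨Y * X, by simp [Matrix.det_mul, hX, hY], fun i => by
    rw [← Matrix.mulVec_mulVec, hXu, hYv]⟩

theorem areEquivalent_of_mulVec_eq {v w : Fin n → Fin d → ℝ} (hv : IsNormalized v)
    (hw : IsNormalized w) (X : Matrix (Fin d) (Fin d) ℝ) (hX : ∀ i, X *ᵥ v i = w i) :
    AreEquivalent v w := by
  have harr : arrMat w = arrMat v * Xᵀ := by
    ext i k
    simp [arrMat, Matrix.mul_apply, ← hX i, Matrix.mulVec, dotProduct, mul_comm]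
  have hXX : X * Xᵀ = 1 := by
    rw [← hw, harr, Matrix.transpose_mul, Matrix.transpose_transpose, Matrix.mul_assoc,
      ← Matrix.mul_assoc (arrMat v)ᵀ, hv, Matrix.one_mul]
  refine ⟨X, fun h0 => ?_, hX⟩
  simpa [Matrix.det_mul, Matrix.det_transpose, h0] using congrArg Matrix.det hXX

theorem IsNormalized.ne_zero [NeZero d] {v : Fin n → Fin d → ℝ} (hv : IsNormalized v) :
    v ≠ 0 := by
  rintro rfl
  have := congrFun (congrFun hv 0) 0
  simp [arrMat] at this

theorem IsRepOf.inv_mulVec_of_intertwines {w : Fin n → Fin d → ℝ}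
    {R : Matrix (Fin d) (Fin d) ℝ} (hS : IsRepOf Γ S w) (hT : IsRep Γ T) (hR : IsUnit R.det)
    (hRT : ∀ φ, R * T φ = S φ * R) :
    IsRepOf Γ T (fun i => R⁻¹ *ᵥ w i) := by
  refine ⟨hT, fun φ i => ?_⟩
  have : T φ * R⁻¹ = R⁻¹ * S φ := by
    calc T φ * R⁻¹ = R⁻¹ * (R * T φ) * R⁻¹ := by
          rw [← Matrix.mul_assoc, Matrix.nonsing_inv_mul _ hR, Matrix.one_mul]
      _ = R⁻¹ * S φ := by
          rw [hRT, Matrix.mul_assoc, Matrix.mul_assoc, Matrix.mul_nonsing_inv _ hR,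
            Matrix.mul_one]
  rw [Matrix.mulVec_mulVec, this, ← Matrix.mulVec_mulVec, hS.2]

theorem IrredRep.deformEquiv_arrNormalize (hirr : IrredRep Γ T) {v u : Fin n → Fin d → ℝ}
    (hv : IsNormalized v) (hvT : IsRepOf Γ T v) (huT : IsRepOf Γ T u)
    (hseg : ∀ t ∈ Set.Icc (0 : ℝ) 1, (1 - t) • v + t • u ≠ 0) :
    DeformEquiv Γ v (arrNormalize u) := by
  have hsegT (t : ℝ) : IsRepOf Γ T ((1 - t) • v + t • u) := (hvT.smul _).add (huT.smul _)
  refine ⟨fun t => arrNormalize ((1 - t) • v + t • u), ?_, fun t ht => ?_, ?_, ?_⟩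
  · exact continuousOn_arrNormalize.comp (by fun_prop) hseg
  · exact ⟨hirr.isNormalized_arrNormalize (hsegT t) (hseg t ht), T, (hsegT t).smul _⟩
  · simpa using hv.arrNormalize_eq
  · simp

theorem IrredRep.flexible_of_isoReps [NeZero d] (hirr : IrredRep Γ T)
    {v w : Fin n → Fin d → ℝ} (hv : IsNormalized v) (hvT : IsRepOf Γ T v) (hw : IsNormalized w)
    (hvw : ¬ AreEquivalent v w) (hwS : IsRepOf Γ S w) (hiso : IsoReps Γ T S) : Flexible Γ v := by
  obtain ⟨R, hR, hRT⟩ := hiso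
  set u : Fin n → Fin d → ℝ := fun i => R⁻¹ *ᵥ w i
  have huT : IsRepOf Γ T u := hwS.inv_mulVec_of_intertwines hvT.1 hR.isUnit hRT
  have hRu (i : Fin n) : R *ᵥ u i = w i := by
    simp [u, Matrix.mulVec_mulVec, Matrix.mul_nonsing_inv _ hR.isUnit]
  have hseg : ∀ t ∈ Set.Icc (0 : ℝ) 1, (1 - t) • v + t • u ≠ 0 := by
    intro t _ h0
    rcases eq_or_ne t 0 with rfl | ht
    · exact hv.ne_zero (by simpa using h0)
    refine hvw (areEquivalent_of_mulVec_eq hv hw (-(t⁻¹ * (1 - t)) • R) fun i => ?_)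
    have hui : u i = -(t⁻¹ * (1 - t)) • v i := by
      have := congrFun h0 i
      simp only [Pi.add_apply, Pi.smul_apply, Pi.zero_apply] at this
      rw [neg_smul, eq_neg_iff_add_eq_zero, mul_smul, ← inv_smul_smul₀ ht (u i), ← smul_add,
        add_comm, this, smul_zero]
    rw [← hRu, hui, Matrix.mulVec_smul, Matrix.smul_mulVec]
  have hu0 : u ≠ 0 := by simpa using hseg 1 (by simp)
  have hnu := hirr.isNormalized_arrNormalize huT hu0
  refine ⟨arrNormalize u, hirr.deformEquiv_arrNormalize hv hvT huT hseg, fun h => hvw ?_⟩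
  exact h.trans (areEquivalent_of_mulVec_eq hw hnu (Real.sqrt (d / ∑ i, u i ⬝ᵥ u i) • R⁻¹)
    fun i => Matrix.smul_mulVec _ _ _).symm

theorem IsRepOf.trace_eq (hx : IsNormalized x) (hS : IsRepOf Γ S x) (φ : Γ) :
    (S φ).trace = ∑ i, x (φ.val i) ⬝ᵥ x i := by
  have h : S φ = (arrMat (fun i => x (φ.val i)))ᵀ * arrMat x := by
    rw [hS.arrMat_comp, Matrix.transpose_mul, Matrix.transpose_transpose, Matrix.mul_assoc, hx,
      Matrix.mul_one]
  rw [h, trace_transpose_arrMat_mul_arrMat]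

theorem IsRep.finrank_intertwiningMap [Fintype Γ] (hT : IsRep Γ T) (hS : IsRep Γ S) :
    (finrank ℝ (IntertwiningMap hT.toRepresentation hS.toRepresentation) : ℝ) =
      (Nat.card Γ : ℝ)⁻¹ * ∑ φ, (S φ).trace * (T φ⁻¹).trace := by
  have : Invertible (Nat.card Γ : ℝ) :=
    invertibleOfNonzero (Nat.cast_ne_zero.mpr Nat.card_pos.ne')
  simp only [← card_inv_mul_sum_char_mul_char_eq_finrank, IsRep.character_toRepresentation]

theorem DeformEquiv.finrank_intertwiningMap_eq {v w : Fin n → Fin d → ℝ}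
    {S' : Γ → Matrix (Fin d) (Fin d) ℝ} (hvw : DeformEquiv Γ v w) (hT : IsRep Γ T)
    (hS : IsRepOf Γ S v) (hS' : IsRepOf Γ S' w) :
    finrank ℝ (IntertwiningMap hT.toRepresentation hS.1.toRepresentation) =
      finrank ℝ (IntertwiningMap hT.toRepresentation hS'.1.toRepresentation) := by
  classical
  let := Fintype.ofFinite Γ
  obtain ⟨c, hc, hmem, rfl, rfl⟩ := hvw
  set g : ℝ → ℝ := fun t => (Nat.card Γ : ℝ)⁻¹ *
    ∑ φ : Γ, (∑ i, c t (φ.val i) ⬝ᵥ c t i) * (T φ⁻¹).trace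
  have hg : ∀ t ∈ Set.Icc (0 : ℝ) 1, ∀ (R : Γ → Matrix (Fin d) (Fin d) ℝ)
      (hR : IsRepOf Γ R (c t)),
      g t = finrank ℝ (IntertwiningMap hT.toRepresentation hR.1.toRepresentation) := by
    intro t ht R hR
    simp only [g, hT.finrank_intertwiningMap, hR.trace_eq (hmem t ht).1]
  have hgc : ContinuousOn g (Set.Icc 0 1) := by
    simp only [g, dotProduct]
    fun_prop
  have hconst := isPreconnected_Icc.constant_of_mapsTo
    Nat.isClosedEmbedding_coe_real.isInducing.isDiscrete_range hgc
    (fun t ht => let ⟨R, hR⟩ := (hmem t ht).2; ⟨_, (hg t ht R hR).symm⟩)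
    (Set.left_mem_Icc.2 zero_le_one) (Set.right_mem_Icc.2 zero_le_one)
  exact_mod_cast (hg 0 (by simp) S hS).symm.trans (hconst.trans (hg 1 (by simp) S' hS'))

theorem IrredRep.isoReps_of_finrank_pos (hirr : IrredRep Γ T) (hT : IsRep Γ T) (hS : IsRep Γ S)
    (h : 0 < finrank ℝ (IntertwiningMap hT.toRepresentation hS.toRepresentation)) :
    IsoReps Γ T S := by
  obtain ⟨f, hf⟩ := finrank_pos_iff_exists_ne_zero.mp h
  set R := LinearMap.toMatrix' f.toLinearMap
  have hRT (φ : Γ) : R * T φ = S φ * R := by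
    have := congrArg LinearMap.toMatrix' (f.isIntertwining' φ)
    rwa [LinearMap.toMatrix'_comp, LinearMap.toMatrix'_comp, hT.toMatrix'_toRepresentation,
      hS.toMatrix'_toRepresentation] at this
  have hR0 : R ≠ 0 := fun h0 => hf (IntertwiningMap.ext (LinearMap.toMatrix'.injective
    (h0.trans (map_zero _).symm)))
  exact ⟨R, hirr.det_ne_zero_of_intertwines hRT hR0, hRT⟩

theorem IsRep.finrank_intertwiningMap_self_pos [NeZero d] (hT : IsRep Γ T) :
    0 < finrank ℝ (IntertwiningMap hT.toRepresentation hT.toRepresentation) := by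
  refine finrank_pos_iff_exists_ne_zero.mpr ⟨IntertwiningMap.id _, fun h => ?_⟩
  simpa using congrFun (DFunLike.congr_fun h (fun _ => 1)) 0

theorem IrredRep.isoReps_of_deformEquiv [NeZero d] (hirr : IrredRep Γ T)
    {v w : Fin n → Fin d → ℝ} (hvT : IsRepOf Γ T v) (hvw : DeformEquiv Γ v w)
    (hwS : IsRepOf Γ S w) : IsoReps Γ T S :=
  hirr.isoReps_of_finrank_pos hvT.1 hwS.1
    (hvw.finrank_intertwiningMap_eq hvT.1 hvT hwS ▸ hvT.1.finrank_intertwiningMap_self_pos)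

theorem DeformEquiv.mem_right {v w : Fin n → Fin d → ℝ} (h : DeformEquiv Γ v w) :
    w ∈ SdSet n d Γ := by
  obtain ⟨c, -, hmem, -, rfl⟩ := h
  exact hmem 1 (Set.right_mem_Icc.2 zero_le_one)

end

theorem stmt12 {n d : ℕ} (Γ : Subgroup (Equiv.Perm (Fin n)))
    (v : Fin n → Fin d → ℝ) (hv : v ∈ SdSet n d Γ)
    (T : Γ → Matrix (Fin d) (Fin d) ℝ)
    (hT : IsRepOf Γ T v) (hTirr : IrredRep Γ T) :
    Flexible Γ v ↔
      ∃ w ∈ SdSet n d Γ, ¬ AreEquivalent v w ∧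
        ∃ T' : Γ → Matrix (Fin d) (Fin d) ℝ, IsRepOf Γ T' w ∧ IsoReps Γ T T' := by
  rcases Nat.eq_zero_or_pos d with rfl | hd
  · have hall (w : Fin n → Fin 0 → ℝ) : AreEquivalent v w :=
      ⟨1, by simp, fun _ => Subsingleton.elim _ _⟩
    simp [Flexible, hall]
  have : NeZero d := ⟨hd.ne'⟩
  constructor
  · rintro ⟨w, hvw, hne⟩
    obtain ⟨S, hS⟩ := hvw.mem_right.2
    exact ⟨w, hvw.mem_right, hne, S, hS, hTirr.isoReps_of_deformEquiv hT hvw hS⟩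
  · rintro ⟨w, hw, hne, T', hT', hiso⟩
    exact hTirr.flexible_of_isoReps hv.1 hT hw.1 hne hT' hiso
end
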